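/- arXiv:1104.0748 — 4 statements merged into one kernel-verified Lean document; each statement's English description precedes it below -/
import Mathlib

section
/- Let E be a Banach scale on (0,S], let τ ∈ (0,S], and let u : E → E be a 1-bounded τ-morphism with constant C. Then for every n ≥ 1 the n-fold composition u^n satisfies ‖u^n x‖_s ≤ n! · 3^n · C^n · σ^{-n} ‖x‖_{s+σ} for all s, σ > 0 with s + σ ≤ τ and all x ∈ E_{s+σ}. -/
open Filter

/-- A Banach scale on the interval `(0,S]`: a real vector space `E` with a decreasing
family of subspaces `E_s = {x | Mem s x}` for `s ∈ (0,S]`, each equipped with a complete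
norm `norm s`, such that the inclusions `E_{s'} ⊆ E_s` (for `s ≤ s'`) have norm at most
`1`. -/
structure BanachScale (E : Type*) [AddCommGroup E] [Module ℝ E] (S : ℝ) where
  /-- membership in `E_s` -/
  Mem : ℝ → E → Prop
  /-- the norm on `E_s` (junk value outside `E_s`) -/
  norm : ℝ → E → ℝ
  mem_zero : ∀ s, Mem s 0
  mem_add : ∀ s x y, Mem s x → Mem s y → Mem s (x + y)
  mem_smul : ∀ s (c : ℝ) x, Mem s x → Mem s (c • x)
  mem_mono : ∀ s s' x, 0 < s → s ≤ s' → Mem s' x → Mem s x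
  norm_nonneg : ∀ s x, 0 ≤ norm s x
  norm_zero : ∀ s, norm s 0 = 0
  norm_eq_zero : ∀ s x, 0 < s → s ≤ S → Mem s x → norm s x = 0 → x = 0
  norm_add : ∀ s x y, norm s (x + y) ≤ norm s x + norm s y
  norm_smul : ∀ s (c : ℝ) x, norm s (c • x) = |c| * norm s x
  norm_mono : ∀ s s' x, 0 < s → s ≤ s' → s' ≤ S → Mem s' x → norm s x ≤ norm s' x
  complete : ∀ s, 0 < s → s ≤ S → ∀ x : ℕ → E, (∀ n, Mem s (x n)) →
    (∀ ε : ℝ, 0 < ε → ∃ N : ℕ, ∀ m ≥ N, ∀ n ≥ N, norm s (x m - x n) ≤ ε) →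
    ∃ y, Mem s y ∧ Tendsto (fun n => norm s (x n - y)) atTop (nhds 0)

namespace BanachScale

variable {E : Type*} [AddCommGroup E] [Module ℝ E] {S : ℝ}

/-- `u` is a `k`-bounded `τ`-morphism with constant `C`:
`u(E_{s+σ}) ⊆ E_s` and `‖u x‖_s ≤ C σ^{-k} ‖x‖_{s+σ}` whenever `0 < s`, `0 < σ`,
`s + σ ≤ τ`. -/
def IsBounded (sc : BanachScale E S) (τ : ℝ) (k : ℕ) (C : ℝ)
    (u : Module.End ℝ E) : Prop :=
  ∀ s σ : ℝ, 0 < s → 0 < σ → s + σ ≤ τ → ∀ x, sc.Mem (s + σ) x →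
    sc.Mem s (u x) ∧ sc.norm s (u x) ≤ C / σ ^ k * sc.norm (s + σ) x

/-- Convergence of a sequence to `y` in the Banach space `E_s`. -/
def ConvergesTo (sc : BanachScale E S) (s : ℝ) (x : ℕ → E) (y : E) : Prop :=
  (∀ n, sc.Mem s (x n)) ∧ sc.Mem s y ∧
    Tendsto (fun n => sc.norm s (x n - y)) atTop (nhds 0)

/-- Partial sums of the exponential series `Σ_j u^j x / j!`. -/
noncomputable def expPartial (u : Module.End ℝ E) (x : E) (N : ℕ) : E :=
  ∑ j ∈ Finset.range N, ((j.factorial : ℝ))⁻¹ • (u ^ j) x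

/-- The sum `e^u x` of the exponential series, when it converges at some level of the
scale (an arbitrary default value otherwise). -/
noncomputable def expMap (sc : BanachScale E S) (u : Module.End ℝ E) (x : E) : E :=
  open scoped Classical in
  if h : ∃ y, ∃ s, 0 < s ∧ s ≤ S ∧ sc.ConvergesTo s (expPartial u x) y then
    h.choose
  else 0

/-- `N_s(u)`: the infimum of the constants `C` such that `u` is a `1`-bounded
`s`-morphism with constant `C`. -/
noncomputable def Nval (sc : BanachScale E S) (s : ℝ) (u : Module.End ℝ E) : ℝ :=
  sInf {C | 0 ≤ C ∧ ∀ s' σ : ℝ, 0 < s' → 0 < σ → s' + σ ≤ s → ∀ x,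
    sc.Mem (s' + σ) x →
      sc.Mem s' (u x) ∧ sc.norm s' (u x) ≤ C / σ * sc.norm (s' + σ) x}

end BanachScale

open BanachScale

/-! Composing a `k`-bounded and an `m`-bounded morphism, and splitting the loss of
width `σ` proportionally as `kσ/(k+m) + mσ/(k+m)`, gives a `(k+m)`-bounded morphism with
constant `C D (k+m)^(k+m) / (k^k m^m)`. By induction `uⁿ` is `n`-bounded with constant
`Cⁿ nⁿ`, and `nⁿ ≤ n! eⁿ ≤ n! 3ⁿ`. -/

lemma pow_le_factorial_mul_three_pow (n : ℕ) : (n : ℝ) ^ n ≤ n.factorial * 3 ^ n := by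
  have hexp : (n : ℝ) ^ n / n.factorial ≤ 3 ^ n :=
    calc (n : ℝ) ^ n / n.factorial ≤ Real.exp n := Real.pow_div_factorial_le_exp _ n.cast_nonneg n
      _ = Real.exp 1 ^ n := (Real.exp_one_pow n).symm
      _ ≤ 3 ^ n := pow_le_pow_left₀ (Real.exp_pos 1).le Real.exp_one_lt_three.le n
  rwa [div_le_iff₀ (by positivity), mul_comm] at hexp

namespace BanachScale

variable {E : Type*} [AddCommGroup E] [Module ℝ E] {S : ℝ} {sc : BanachScale E S} {τ : ℝ}
  {k m : ℕ} {C D : ℝ} {u v : Module.End ℝ E}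

lemma IsBounded.mono_const (hu : sc.IsBounded τ k C u) (hCD : C ≤ D) :
    sc.IsBounded τ k D u := by
  intro s σ hs hσ hsσ x hx
  obtain ⟨hmem, hnorm⟩ := hu s σ hs hσ hsσ x hx
  refine ⟨hmem, hnorm.trans ?_⟩
  gcongr
  exact sc.norm_nonneg _ _

lemma IsBounded.mul (hC : 0 ≤ C) (hk : 0 < k) (hm : 0 < m)
    (hu : sc.IsBounded τ k C u) (hv : sc.IsBounded τ m D v) :
    sc.IsBounded τ (k + m) (C * D * ((k : ℝ) + m) ^ (k + m) / (k ^ k * m ^ m)) (u * v) := by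
  intro s σ hs hσ hsσ x hx
  have hkm : (0 : ℝ) < k + m := by positivity
  set δ : ℝ := k * σ / (k + m)
  set ε : ℝ := m * σ / (k + m)
  have hδ : 0 < δ := by positivity
  have hε : 0 < ε := by positivity
  have hsplit : s + δ + ε = s + σ := by
    simp only [δ, ε]; field_simp; ring
  obtain ⟨hvmem, hvnorm⟩ := hv (s + δ) ε (by positivity) hε (by rwa [hsplit]) x (by rwa [hsplit])
  obtain ⟨humem, hunorm⟩ := hu s δ hs hδ (by linarith) (v x) hvmem
  refine ⟨humem, ?_⟩
  calc sc.norm s (u (v x)) ≤ C / δ ^ k * sc.norm (s + δ) (v x) := hunorm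
    _ ≤ C / δ ^ k * (D / ε ^ m * sc.norm (s + σ) x) := by
      rw [← hsplit]; gcongr
    _ = C * D * ((k : ℝ) + m) ^ (k + m) / (k ^ k * m ^ m) / σ ^ (k + m) * sc.norm (s + σ) x := by
      simp only [δ, ε, div_pow, mul_pow]
      field_simp
      ring

lemma IsBounded.pow (hC : 0 ≤ C) (hu : sc.IsBounded τ 1 C u) {n : ℕ} (hn : 1 ≤ n) :
    sc.IsBounded τ n (C ^ n * n ^ n) (u ^ n) := by
  induction n, hn using Nat.le_induction with
  | base => simpa using hu
  | succ n hn ih =>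
    have hstep := hu.mul hC one_pos (by omega) ih
    rw [add_comm 1 n, ← pow_succ'] at hstep
    convert hstep using 1
    have hn0 : (n : ℝ) ≠ 0 := by positivity
    push_cast
    field_simp
    ring

end BanachScale

open BanachScale

theorem pow_isBounded_general {E : Type*} [AddCommGroup E] [Module ℝ E] {S : ℝ}
    (sc : BanachScale E S) (τ : ℝ)
    (u : Module.End ℝ E) (C : ℝ) (hC : 0 ≤ C)
    (hu : sc.IsBounded τ 1 C u) :
    ∀ n : ℕ, 1 ≤ n → ∀ s σ : ℝ, 0 < s → 0 < σ → s + σ ≤ τ → ∀ x, sc.Mem (s + σ) x →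
      sc.Mem s ((u ^ n) x) ∧
      sc.norm s ((u ^ n) x) ≤
        (n.factorial : ℝ) * 3 ^ n * C ^ n / σ ^ n * sc.norm (s + σ) x := by
  intro n hn
  refine (hu.pow hC hn).mono_const ?_
  rw [mul_comm _ (C ^ n)]
  gcongr
  exact pow_le_factorial_mul_three_pow n

/-- If `u` is a `1`-bounded `τ`-morphism with constant `C`, then for all `n ≥ 1` the
`n`-fold composition satisfies `‖uⁿ x‖_s ≤ n!·3ⁿ·Cⁿ·σ^{-n}·‖x‖_{s+σ}`. -/
theorem pow_isBounded {E : Type*} [AddCommGroup E] [Module ℝ E] {S : ℝ} (hS : 0 < S)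
    (sc : BanachScale E S) (τ : ℝ) (hτ0 : 0 < τ) (hτS : τ ≤ S)
    (u : Module.End ℝ E) (C : ℝ) (hC : 0 ≤ C)
    (hu : sc.IsBounded τ 1 C u) :
    ∀ n : ℕ, 1 ≤ n → ∀ s σ : ℝ, 0 < s → 0 < σ → s + σ ≤ τ → ∀ x, sc.Mem (s + σ) x →
      sc.Mem s ((u ^ n) x) ∧
      sc.norm s ((u ^ n) x) ≤
        (n.factorial : ℝ) * 3 ^ n * C ^ n / σ ^ n * sc.norm (s + σ) x :=
  pow_isBounded_general sc τ u C hC hu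
end

section
/- Let E be a Banach scale on (0,S], let τ ∈ (0,S], and let u : E → E be a 1-bounded τ-morphism with constant C. Fix s ∈ (0,τ] with 3C < s and let λ ∈ (0, 1 − 3C/s). Then for every x ∈ E_s the series e^u x := Σ_{j≥0} u^j x / j! converges absolutely in the Banach space E_{λs}, and ‖e^u x‖_{λs} ≤ Σ_{j≥0} (3C)^j / ((1−λ)^j s^j) · ‖x‖_s = (1 − 3C/((1−λ)s))^{-1} ‖x‖_s. -/
open Filter

open BanachScale

/-!
Splitting the gap `s - t` into `j` equal steps of length `(s - t) / j` bounds
`‖u^j x‖_t ≤ (C j / (s - t))^j ‖x‖_s`. Since `j^j ≤ e^j j! ≤ 3^j j!`, the terms of the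
exponential series are dominated in `E_t` by a geometric series of ratio `3C / (s - t)`,
which is `< 1` for `t = λs`; completeness of `E_t` then yields the sum and its bound.
-/

theorem Nat.cast_pow_self_le_three_pow_mul_factorial (n : ℕ) :
    (n : ℝ) ^ n ≤ 3 ^ n * n.factorial := by
  have hexp : (n : ℝ) ^ n / n.factorial ≤ 3 ^ n :=
    calc (n : ℝ) ^ n / n.factorial ≤ Real.exp n := Real.pow_div_factorial_le_exp _ n.cast_nonneg n
      _ = Real.exp 1 ^ n := by rw [← Real.exp_nat_mul, mul_one]
      _ ≤ 3 ^ n := pow_le_pow_left₀ (Real.exp_pos 1).le Real.exp_one_lt_three.le n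
  rwa [div_le_iff₀ (by positivity)] at hexp

namespace BanachScale

variable {E : Type*} [AddCommGroup E] [Module ℝ E] {S : ℝ} (sc : BanachScale E S)

theorem norm_sub_comm (t : ℝ) (a b : E) : sc.norm t (a - b) = sc.norm t (b - a) := by
  rw [← neg_sub, ← neg_one_smul ℝ (b - a), sc.norm_smul, abs_neg, abs_one, one_mul]

theorem mem_sum {t : ℝ} {ι : Type*} (s : Finset ι) {v : ι → E} (hv : ∀ i ∈ s, sc.Mem t (v i)) :
    sc.Mem t (∑ i ∈ s, v i) :=
  Finset.sum_induction v (sc.Mem t) (sc.mem_add t) (sc.mem_zero t) hv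

theorem norm_sum_le (t : ℝ) {ι : Type*} (s : Finset ι) (v : ι → E) :
    sc.norm t (∑ i ∈ s, v i) ≤ ∑ i ∈ s, sc.norm t (v i) :=
  Finset.le_sum_of_subadditive (sc.norm t) (sc.norm_zero t).le (sc.norm_add t) s v

theorem norm_sum_range_sub_le (t : ℝ) (v : ℕ → E) (m n : ℕ) :
    sc.norm t (∑ j ∈ Finset.range m, v j - ∑ j ∈ Finset.range n, v j) ≤
      dist (∑ j ∈ Finset.range m, sc.norm t (v j)) (∑ j ∈ Finset.range n, sc.norm t (v j)) := by
  wlog hnm : n ≤ m generalizing m n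
  · rw [sc.norm_sub_comm, dist_comm]
    exact this n m (le_of_not_ge hnm)
  rw [Real.dist_eq, ← Finset.sum_Ico_eq_sub v hnm,
    ← Finset.sum_Ico_eq_sub (fun j => sc.norm t (v j)) hnm]
  exact (sc.norm_sum_le t _ v).trans (le_abs_self _)

theorem norm_le_of_convergesTo {t B : ℝ} {x : ℕ → E} {y : E} (hxy : sc.ConvergesTo t x y)
    (hB : ∀ n, sc.norm t (x n) ≤ B) : sc.norm t y ≤ B := by
  have hle : ∀ n, sc.norm t y ≤ sc.norm t (x n - y) + B := fun n =>
    calc sc.norm t y = sc.norm t ((y - x n) + x n) := by rw [sub_add_cancel]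
      _ ≤ sc.norm t (x n - y) + sc.norm t (x n) := by
        rw [← sc.norm_sub_comm]; exact sc.norm_add t _ _
      _ ≤ sc.norm t (x n - y) + B := by gcongr; exact hB n
  have hlim : Tendsto (fun n => sc.norm t (x n - y) + B) atTop (nhds B) := by
    simpa using hxy.2.2.add_const B
  exact ge_of_tendsto' hlim hle

theorem exists_convergesTo_of_summable_norm {t : ℝ} (ht0 : 0 < t) (htS : t ≤ S) {v : ℕ → E}
    (hv : ∀ j, sc.Mem t (v j)) (hsum : Summable fun j => sc.norm t (v j)) :
    ∃ y, sc.ConvergesTo t (fun N => ∑ j ∈ Finset.range N, v j) y ∧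
      sc.norm t y ≤ ∑' j, sc.norm t (v j) := by
  have hmem : ∀ N, sc.Mem t (∑ j ∈ Finset.range N, v j) := fun N =>
    sc.mem_sum _ fun j _ => hv j
  have hcauchy : ∀ ε : ℝ, 0 < ε → ∃ N : ℕ, ∀ m ≥ N, ∀ n ≥ N,
      sc.norm t (∑ j ∈ Finset.range m, v j - ∑ j ∈ Finset.range n, v j) ≤ ε := by
    intro ε hε
    obtain ⟨N, hN⟩ := Metric.cauchySeq_iff.mp hsum.hasSum.tendsto_sum_nat.cauchySeq ε hε
    exact ⟨N, fun m hm n hn => (sc.norm_sum_range_sub_le t v m n).trans (hN m hm n hn).le⟩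
  obtain ⟨y, hy, hlim⟩ := sc.complete t ht0 htS _ hmem hcauchy
  have hconv : sc.ConvergesTo t (fun N => ∑ j ∈ Finset.range N, v j) y := ⟨hmem, hy, hlim⟩
  refine ⟨y, hconv, sc.norm_le_of_convergesTo hconv fun N => ?_⟩
  exact (sc.norm_sum_le t _ v).trans
    (hsum.sum_le_tsum _ fun j _ => sc.norm_nonneg t (v j))

variable {sc} {τ C : ℝ} {u : Module.End ℝ E}

theorem IsBounded.norm_pow_apply_le (hC : 0 ≤ C) (hu : sc.IsBounded τ 1 C u) (j : ℕ) {t σ : ℝ}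
    (ht : 0 < t) (hσ : 0 < σ) (hτ : t + j * σ ≤ τ) {x : E} (hx : sc.Mem (t + j * σ) x) :
    sc.Mem t ((u ^ j) x) ∧ sc.norm t ((u ^ j) x) ≤ (C / σ) ^ j * sc.norm (t + j * σ) x := by
  induction j generalizing t with
  | zero => simp_all
  | succ j ih =>
    have hshift : t + σ + j * σ = t + (j + 1 : ℕ) * σ := by push_cast; ring
    obtain ⟨hmem, hnorm⟩ := ih (t := t + σ) (by positivity) (by rwa [hshift]) (by rwa [hshift])
    obtain ⟨hmem', hnorm'⟩ := hu t σ ht hσ (by nlinarith [j.cast_nonneg (α := ℝ)]) _ hmem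
    rw [pow_succ', Module.End.mul_apply, ← hshift]
    refine ⟨hmem', hnorm'.trans ?_⟩
    rw [pow_one, pow_succ', mul_assoc]
    gcongr

theorem IsBounded.norm_factorial_inv_smul_norm_pow_apply_le_le (hC : 0 ≤ C) (hu : sc.IsBounded τ 1 C u)
    {t s : ℝ} (ht : 0 < t) (hts : t < s) (hsτ : s ≤ τ) (hsS : s ≤ S) {x : E} (hx : sc.Mem s x)
    (j : ℕ) :
    sc.Mem t (((j.factorial : ℝ))⁻¹ • (u ^ j) x) ∧
      sc.norm t (((j.factorial : ℝ))⁻¹ • (u ^ j) x) ≤ (3 * C / (s - t)) ^ j * sc.norm s x := by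
  rcases j.eq_zero_or_pos with rfl | hj
  · simpa using ⟨sc.mem_mono t s x ht hts.le hx, sc.norm_mono t s x ht hts.le hsS hx⟩
  have hj' : (0 : ℝ) < j := by exact_mod_cast hj
  have hstep : t + j * ((s - t) / j) = s := by field_simp; ring
  obtain ⟨hmem, hnorm⟩ := hu.norm_pow_apply_le hC j ht (div_pos (by linarith) hj') (σ := (s - t) / j)
    (by rwa [hstep]) (by rwa [hstep])
  rw [hstep] at hnorm
  refine ⟨sc.mem_smul t _ _ hmem, ?_⟩
  rw [sc.norm_smul, abs_of_nonneg (by positivity)]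
  calc ((j.factorial : ℝ))⁻¹ * sc.norm t ((u ^ j) x)
      ≤ ((j.factorial : ℝ))⁻¹ * ((C / ((s - t) / j)) ^ j * sc.norm s x) := by gcongr
    _ = (C / (s - t)) ^ j * ((j : ℝ) ^ j / j.factorial) * sc.norm s x := by
      rw [div_div_eq_mul_div, mul_div_right_comm, mul_pow]; ring
    _ ≤ (C / (s - t)) ^ j * 3 ^ j * sc.norm s x := by
      gcongr
      · exact sc.norm_nonneg s x
      · rw [div_le_iff₀ (by positivity)]
        exact Nat.cast_pow_self_le_three_pow_mul_factorial j
    _ = (3 * C / (s - t)) ^ j * sc.norm s x := by rw [mul_div_assoc, mul_pow]; ring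

end BanachScale

theorem exp_converges_general {E : Type*} [AddCommGroup E] [Module ℝ E] {S : ℝ}
    (sc : BanachScale E S) (τ : ℝ) (hτS : τ ≤ S)
    (u : Module.End ℝ E) (C : ℝ) (hC : 0 ≤ C)
    (hu : sc.IsBounded τ 1 C u)
    (s : ℝ) (hs0 : 0 < s) (hsτ : s ≤ τ)
    (lam : ℝ) (hlam0 : 0 < lam) (hlam1 : lam < 1 - 3 * C / s) :
    ∀ x, sc.Mem s x →
      (∀ j : ℕ, sc.Mem (lam * s) (((j.factorial : ℝ))⁻¹ • (u ^ j) x)) ∧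
      (Summable fun j : ℕ => sc.norm (lam * s) (((j.factorial : ℝ))⁻¹ • (u ^ j) x)) ∧
      ∃ y, sc.ConvergesTo (lam * s) (expPartial u x) y ∧
        sc.norm (lam * s) y ≤ (1 - 3 * C / ((1 - lam) * s))⁻¹ * sc.norm s x := by
  intro x hx
  have hgap : 3 * C < (1 - lam) * s := by
    rwa [lt_sub_comm, div_lt_iff₀ hs0] at hlam1
  have hts : lam * s < s := by linarith
  have hq0 : 0 ≤ 3 * C / ((1 - lam) * s) := by
    have : 0 < (1 - lam) * s := by linarith
    positivity
  have hq1 : 3 * C / ((1 - lam) * s) < 1 := (div_lt_one (by linarith)).mpr hgap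
  have hterm := hu.norm_factorial_inv_smul_norm_pow_apply_le_le hC (mul_pos hlam0 hs0) hts hsτ
    (hsτ.trans hτS) hx
  simp only [← one_sub_mul] at hterm
  have hgeom := (summable_geometric_of_lt_one hq0 hq1).mul_right (sc.norm s x)
  have hsum := hgeom.of_nonneg_of_le (fun j => sc.norm_nonneg _ _) (fun j => (hterm j).2)
  obtain ⟨y, hy, hbound⟩ := sc.exists_convergesTo_of_summable_norm (mul_pos hlam0 hs0)
    (hts.le.trans (hsτ.trans hτS)) (fun j => (hterm j).1) hsum
  refine ⟨fun j => (hterm j).1, hsum, y, hy, hbound.trans ?_⟩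
  rw [← tsum_geometric_of_lt_one hq0 hq1, ← tsum_mul_right]
  exact hsum.tsum_le_tsum (fun j => (hterm j).2) hgeom

/-- If `u` is a `1`-bounded `τ`-morphism with constant `C`, `3C < s ≤ τ` and
`λ ∈ (0, 1 − 3C/s)`, then for every `x ∈ E_s` the exponential series
`e^u x = Σ_j u^j x / j!` converges absolutely in `E_{λs}` and its sum `y` satisfies
`‖y‖_{λs} ≤ (1 − 3C/((1−λ)s))⁻¹ ‖x‖_s`. -/
theorem exp_converges {E : Type*} [AddCommGroup E] [Module ℝ E] {S : ℝ} (hS : 0 < S)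
    (sc : BanachScale E S) (τ : ℝ) (hτ0 : 0 < τ) (hτS : τ ≤ S)
    (u : Module.End ℝ E) (C : ℝ) (hC : 0 ≤ C)
    (hu : sc.IsBounded τ 1 C u)
    (s : ℝ) (hs0 : 0 < s) (hsτ : s ≤ τ) (h3C : 3 * C < s)
    (lam : ℝ) (hlam0 : 0 < lam) (hlam1 : lam < 1 - 3 * C / s) :
    ∀ x, sc.Mem s x →
      (∀ j : ℕ, sc.Mem (lam * s) (((j.factorial : ℝ))⁻¹ • (u ^ j) x)) ∧
      (Summable fun j : ℕ => sc.norm (lam * s) (((j.factorial : ℝ))⁻¹ • (u ^ j) x)) ∧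
      ∃ y, sc.ConvergesTo (lam * s) (expPartial u x) y ∧
        sc.norm (lam * s) y ≤ (1 - 3 * C / ((1 - lam) * s))⁻¹ * sc.norm s x :=
  exp_converges_general sc τ hτS u C hC hu s hs0 hsτ lam hlam0 hlam1
end

section
/- Let E be a Banach scale on (0,S], let τ ∈ (0,S], and let u : E → E be a 1-bounded τ-morphism with constant C. Let s ∈ (0,τ) satisfy 3C/(τ−s) ≤ 1/2. Then for every x ∈ E_τ the following inequalities hold (all exponential series converging in E_s): (1) ‖(e^{-u}(Id+u) − Id)x‖_s ≤ 36 C² (τ−s)^{-2} ‖x‖_τ; (3) ‖(e^{-u} − Id)x‖_s ≤ 6 C (τ−s)^{-1} ‖x‖_τ; (5) ‖e^{u} x‖_s ≤ 2 ‖x‖_τ; and if moreover u(x) ∈ E_τ, then (2) ‖(e^{-u}(Id+u) − Id)x‖_s ≤ 2 C (τ−s)^{-1} ‖u(x)‖_τ and (4) ‖(e^{-u} − Id)x‖_s ≤ 2 ‖u(x)‖_τ. -/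
open Filter

open BanachScale

/-!
Splitting the loss `τ - s` into `n` equal steps gives `‖uⁿ x‖_s ≤ (C n / (τ - s))ⁿ ‖x‖_τ`, and
`nⁿ ≤ 3ⁿ n!` (from `(1 + 1/n)ⁿ ≤ e < 3`) dominates the exponential series termwise by the
geometric series in `q = 3C/(τ - s) ≤ 1/2`; the sums are taken in the Banach space `E_s`.
In `e^{-u}(x + u x) - x = ∑ₙ ((-1)ⁿ/n! - (-1)ⁿ/(n+1)!) uⁿ⁺¹ x = ∑ₙ (-1)ⁿ n/(n+1)! uⁿ⁺¹ x` the
term with `u x` cancels, which yields the factor `C²/(τ - s)²` of (1); bound (2), which sees one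
power of `u` less, needs the sharper `(n+1)ⁿ⁺¹ ≤ 3ⁿ (n+1)!`.
-/

open Finset Nat

theorem succ_pow_le_three_mul_pow (m : ℕ) : (m + 1) ^ m ≤ 3 * m ^ m := by
  rcases m.eq_zero_or_pos with rfl | hm
  · norm_num
  have hm' : (0 : ℝ) < m := by exact_mod_cast hm
  have key : ((m : ℝ) + 1) ^ m = (1 + (m : ℝ)⁻¹) ^ m * (m : ℝ) ^ m := by
    rw [← mul_pow, add_mul, inv_mul_cancel₀ hm'.ne', one_mul, add_comm]
  have hexp : (1 + (m : ℝ)⁻¹) ^ m ≤ 3 := Real.one_add_inv_pow_le_exp.trans Real.exp_one_lt_three.le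
  exact_mod_cast key ▸ mul_le_mul_of_nonneg_right hexp (by positivity)

theorem succ_pow_succ_le_three_pow_mul_factorial (n : ℕ) :
    (n + 1) ^ (n + 1) ≤ 3 ^ n * (n + 1)! := by
  induction n with
  | zero => simp
  | succ n ih =>
    calc (n + 2) ^ (n + 2) = (n + 2) * (n + 2) ^ (n + 1) := pow_succ' _ _
      _ ≤ (n + 2) * (3 * (n + 1) ^ (n + 1)) := by gcongr; exact succ_pow_le_three_mul_pow (n + 1)
      _ ≤ (n + 2) * (3 * (3 ^ n * (n + 1)!)) := by gcongr
      _ = 3 ^ (n + 1) * (n + 2)! := by rw [factorial_succ (n + 1)]; ring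

theorem pow_self_le_three_pow_mul_factorial (n : ℕ) : n ^ n ≤ 3 ^ n * n ! := by
  cases n with
  | zero => simp
  | succ n =>
    calc (n + 1) ^ (n + 1) ≤ 3 ^ n * (n + 1)! := succ_pow_succ_le_three_pow_mul_factorial n
      _ ≤ 3 ^ (n + 1) * (n + 1)! := by gcongr <;> omega

theorem mul_pow_self_div_factorial_le {t : ℝ} (ht : 0 ≤ t) (n : ℕ) :
    (t * n) ^ n / n ! ≤ (3 * t) ^ n := by
  rw [div_le_iff₀ (by positivity), mul_pow, mul_pow]
  calc t ^ n * (n : ℝ) ^ n ≤ t ^ n * (3 ^ n * n !) := by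
        gcongr; exact_mod_cast pow_self_le_three_pow_mul_factorial n
    _ = 3 ^ n * t ^ n * n ! := by ring

theorem mul_succ_pow_succ_div_factorial_le {t : ℝ} (ht : 0 ≤ t) (n : ℕ) :
    (t * (n + 1 : ℕ)) ^ (n + 1) / (n + 1)! ≤ t * (3 * t) ^ n := by
  rw [div_le_iff₀ (by positivity), mul_pow, mul_pow, pow_succ t]
  calc t ^ n * t * ((n + 1 : ℕ) : ℝ) ^ (n + 1) ≤ t ^ n * t * (3 ^ n * (n + 1)!) := by
        gcongr; exact_mod_cast succ_pow_succ_le_three_pow_mul_factorial n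
    _ = t * (3 ^ n * t ^ n) * (n + 1)! := by ring

theorem inv_one_sub_le_two {q : ℝ} (hq : q ≤ 1 / 2) : (1 - q)⁻¹ ≤ 2 := by
  rw [inv_le_comm₀ (by linarith) two_pos]; linarith

noncomputable def expNegCoeff (n : ℕ) : ℝ := (-1) ^ n * (n ! : ℝ)⁻¹

theorem expNegCoeff_zero : expNegCoeff 0 = 1 := by simp [expNegCoeff]

theorem abs_expNegCoeff (n : ℕ) : |expNegCoeff n| = (n ! : ℝ)⁻¹ := by
  simp [expNegCoeff, abs_mul]

theorem abs_expNegCoeff_succ_le (n : ℕ) : |expNegCoeff (n + 1)| ≤ (n ! : ℝ)⁻¹ := by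
  rw [abs_expNegCoeff]
  exact inv_anti₀ (by positivity) (by exact_mod_cast factorial_le n.le_succ)

theorem expNegCoeff_add_succ (n : ℕ) :
    expNegCoeff n + expNegCoeff (n + 1) = -(n * expNegCoeff (n + 1)) := by
  simp only [expNegCoeff, factorial_succ, cast_mul, cast_succ, pow_succ]
  field_simp
  ring

theorem abs_expNegCoeff_add_succ_le (n : ℕ) :
    |expNegCoeff n + expNegCoeff (n + 1)| ≤ (n ! : ℝ)⁻¹ := by
  rw [expNegCoeff_add_succ, abs_neg, abs_mul, abs_expNegCoeff, Nat.abs_cast, factorial_succ,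
    cast_mul, mul_inv, ← mul_assoc, cast_succ]
  refine mul_le_of_le_one_left (by positivity) ?_
  rw [← div_eq_mul_inv, div_le_one (by positivity)]
  linarith

section SeriesEstimates

variable {F : Type*} [SeminormedAddCommGroup F] [NormedSpace ℝ F]
  {a b : ℕ → F} {c : ℕ → ℝ} {t M : ℝ} {y z : F}

theorem norm_smul_le_of_abs_le_inv_factorial {r : ℝ} {v : F} {n : ℕ} (ht : 0 ≤ t) (hM : 0 ≤ M)
    (hr : |r| ≤ (n ! : ℝ)⁻¹) (hv : ‖v‖ ≤ (t * n) ^ n * M) : ‖r • v‖ ≤ (3 * t) ^ n * M :=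
  calc ‖r • v‖ = |r| * ‖v‖ := by rw [_root_.norm_smul, Real.norm_eq_abs]
    _ ≤ (n ! : ℝ)⁻¹ * ((t * n) ^ n * M) := by gcongr
    _ = (t * n) ^ n / n ! * M := by ring
    _ ≤ (3 * t) ^ n * M := by gcongr; exact mul_pow_self_div_factorial_le ht n

theorem norm_smul_le_of_abs_le_inv_factorial_succ {r : ℝ} {v : F} {n : ℕ} (ht : 0 ≤ t) (hM : 0 ≤ M)
    (hr : |r| ≤ ((n + 1)! : ℝ)⁻¹) (hv : ‖v‖ ≤ (t * (n + 1 : ℕ)) ^ (n + 1) * M) :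
    ‖r • v‖ ≤ t * M * (3 * t) ^ n :=
  calc ‖r • v‖ = |r| * ‖v‖ := by rw [_root_.norm_smul, Real.norm_eq_abs]
    _ ≤ ((n + 1)! : ℝ)⁻¹ * ((t * (n + 1 : ℕ)) ^ (n + 1) * M) := by gcongr
    _ = (t * (n + 1 : ℕ)) ^ (n + 1) / (n + 1)! * M := by ring
    _ ≤ t * (3 * t) ^ n * M := by gcongr; exact mul_succ_pow_succ_div_factorial_le ht n
    _ = t * M * (3 * t) ^ n := by ring

theorem summable_smul_of_abs_le [CompleteSpace F] (ht : 0 ≤ t) (h3t : 3 * t < 1) (hM : 0 ≤ M)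
    (hc : ∀ n, |c n| ≤ (n ! : ℝ)⁻¹) (ha : ∀ n, ‖a n‖ ≤ (t * n) ^ n * M) :
    Summable fun n => c n • a n :=
  ((summable_geometric_of_lt_one (by positivity) h3t).mul_right M).of_norm_bounded fun n =>
    norm_smul_le_of_abs_le_inv_factorial ht hM (hc n) (ha n)

theorem HasSum.norm_le_of_abs_le (h : HasSum (fun n => c n • a n) y) (ht : 0 ≤ t)
    (h3t : 3 * t ≤ 1 / 2) (hM : 0 ≤ M) (hc : ∀ n, |c n| ≤ (n ! : ℝ)⁻¹)
    (ha : ∀ n, ‖a n‖ ≤ (t * n) ^ n * M) : ‖y‖ ≤ 2 * M :=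
  calc ‖y‖ ≤ (1 - 3 * t)⁻¹ * M :=
        h.norm_le_of_bounded
          ((hasSum_geometric_of_lt_one (by positivity) (by linarith)).mul_right M)
          fun n => norm_smul_le_of_abs_le_inv_factorial ht hM (hc n) (ha n)
    _ ≤ 2 * M := by gcongr; exact inv_one_sub_le_two h3t

theorem HasSum.tail_smul (h : HasSum (fun n => c n • a n) y) (hc : c 0 = 1) :
    HasSum (fun n => c (n + 1) • a (n + 1)) (y - a 0) := by
  simpa [hc] using (hasSum_nat_add_iff' 1).2 h

theorem HasSum.norm_sub_le_of_abs_le (h : HasSum (fun n => c n • a n) y) (hc0 : c 0 = 1)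
    (ht : 0 ≤ t) (h3t : 3 * t ≤ 1 / 2) (hM : 0 ≤ M) (hc : ∀ n, |c n| ≤ (n ! : ℝ)⁻¹)
    (ha : ∀ n, ‖a n‖ ≤ (t * n) ^ n * M) : ‖y - a 0‖ ≤ 6 * t * M :=
  calc ‖y - a 0‖ ≤ 3 * t * M * (1 - 3 * t)⁻¹ :=
        (h.tail_smul hc0).norm_le_of_bounded
          ((hasSum_geometric_of_lt_one (by positivity) (by linarith)).mul_left (3 * t * M))
          fun n => (norm_smul_le_of_abs_le_inv_factorial ht hM (hc _) (ha _)).trans_eq (by ring)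
    _ ≤ 3 * t * M * 2 := by gcongr; exact inv_one_sub_le_two h3t
    _ = 6 * t * M := by ring

theorem HasSum.smul_add_succ (hy : HasSum (fun n => c n • a n) y)
    (hz : HasSum (fun n => (c n + c (n + 1)) • a (n + 1)) z) (hc0 : c 0 = 1) :
    HasSum (fun n => c n • (a n + a (n + 1))) (a 0 + z) := by
  have hshift : HasSum (fun n => c n • a (n + 1)) (z - (y - a 0)) := by
    convert hz.sub (hy.tail_smul hc0) using 2 with n
    rw [add_smul, add_sub_cancel_right]
  convert hy.add hshift using 1
  · simp only [smul_add]
  · abel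

theorem norm_expNegCoeff_add_succ_smul (n : ℕ) (v : F) :
    ‖(expNegCoeff n + expNegCoeff (n + 1)) • v‖ = n * ‖expNegCoeff (n + 1) • v‖ := by
  rw [expNegCoeff_add_succ, _root_.norm_smul, _root_.norm_smul, norm_neg, norm_mul,
    Real.norm_natCast, mul_assoc]

theorem norm_expNegCoeff_remainder_le (ht : 0 ≤ t) (hM : 0 ≤ M)
    (ha : ∀ n, ‖a n‖ ≤ (t * n) ^ n * M) (n : ℕ) :
    ‖(expNegCoeff n + expNegCoeff (n + 1)) • a (n + 1)‖ ≤ 3 * t * M * (n * (3 * t) ^ n) :=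
  calc _ = n * ‖expNegCoeff (n + 1) • a (n + 1)‖ := norm_expNegCoeff_add_succ_smul n _
    _ ≤ n * ((3 * t) ^ (n + 1) * M) := by
        gcongr; exact norm_smul_le_of_abs_le_inv_factorial ht hM (abs_expNegCoeff _).le (ha _)
    _ = 3 * t * M * (n * (3 * t) ^ n) := by ring

theorem hasSum_coe_mul_geometric_three_mul (ht : 0 ≤ t) (h3t : 3 * t < 1) :
    HasSum (fun n : ℕ => n * (3 * t) ^ n) (3 * t / (1 - 3 * t) ^ 2) :=
  hasSum_coe_mul_geometric_of_norm_lt_one (by rwa [Real.norm_of_nonneg (by positivity)])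

theorem summable_expNegCoeff_remainder [CompleteSpace F] (ht : 0 ≤ t) (h3t : 3 * t < 1)
    (hM : 0 ≤ M) (ha : ∀ n, ‖a n‖ ≤ (t * n) ^ n * M) :
    Summable fun n => (expNegCoeff n + expNegCoeff (n + 1)) • a (n + 1) :=
  ((hasSum_coe_mul_geometric_three_mul ht h3t).summable.mul_left _).of_norm_bounded
    (norm_expNegCoeff_remainder_le ht hM ha)

theorem HasSum.norm_le_of_expNegCoeff_remainder
    (h : HasSum (fun n => (expNegCoeff n + expNegCoeff (n + 1)) • a (n + 1)) z)
    (ht : 0 ≤ t) (h3t : 3 * t ≤ 1 / 2) (hM : 0 ≤ M) (ha : ∀ n, ‖a n‖ ≤ (t * n) ^ n * M) :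
    ‖z‖ ≤ 36 * t ^ 2 * M :=
  calc ‖z‖ ≤ 3 * t * M * (3 * t / (1 - 3 * t) ^ 2) :=
        h.norm_le_of_bounded ((hasSum_coe_mul_geometric_three_mul ht (by linarith)).mul_left _)
          (norm_expNegCoeff_remainder_le ht hM ha)
    _ = 9 * t ^ 2 * M * (1 - 3 * t)⁻¹ ^ 2 := by rw [inv_pow]; ring
    _ ≤ 9 * t ^ 2 * M * 2 ^ 2 := by
        gcongr
        · exact inv_nonneg.2 (by linarith)
        · exact inv_one_sub_le_two h3t
    _ = 36 * t ^ 2 * M := by ring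

theorem HasSum.norm_le_of_expNegCoeff_remainder_of_shift
    (h : HasSum (fun n => (expNegCoeff n + expNegCoeff (n + 1)) • a (n + 1)) z)
    (hab : ∀ n, a (n + 1) = b n) (ht : 0 ≤ t) (h3t : 3 * t ≤ 1 / 2) (hM : 0 ≤ M)
    (hb : ∀ n, ‖b n‖ ≤ (t * n) ^ n * M) : ‖z‖ ≤ 2 * t * M := by
  have h0 : expNegCoeff 0 + expNegCoeff (0 + 1) = 0 := by simp [expNegCoeff]
  have h' : HasSum (fun n => (expNegCoeff (n + 1) + expNegCoeff (n + 1 + 1)) • b (n + 1)) z := by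
    simpa [h0, hab] using (hasSum_nat_add_iff' 1).2 h
  calc ‖z‖ ≤ t * M * (1 - 3 * t)⁻¹ :=
        h'.norm_le_of_bounded
          ((hasSum_geometric_of_lt_one (by positivity) (by linarith)).mul_left (t * M))
          fun n => norm_smul_le_of_abs_le_inv_factorial_succ ht hM
            (abs_expNegCoeff_add_succ_le _) (hb _)
    _ ≤ t * M * 2 := by gcongr; exact inv_one_sub_le_two h3t
    _ = 2 * t * M := by ring

theorem HasSum.norm_sub_le_of_shift (h : HasSum (fun n => expNegCoeff n • a n) y)
    (hab : ∀ n, a (n + 1) = b n) (ht : 0 ≤ t) (h3t : 3 * t ≤ 1 / 2) (hM : 0 ≤ M)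
    (hb : ∀ n, ‖b n‖ ≤ (t * n) ^ n * M) : ‖y - a 0‖ ≤ 2 * M := by
  have h' := h.tail_smul expNegCoeff_zero
  simp only [hab] at h'
  exact h'.norm_le_of_abs_le ht h3t hM abs_expNegCoeff_succ_le hb

end SeriesEstimates

section ExpPartial

variable {E : Type*} [AddCommGroup E] [Module ℝ E]

theorem expPartial_neg (u : Module.End ℝ E) (x : E) (N : ℕ) :
    expPartial (-u) x N = ∑ n ∈ range N, expNegCoeff n • (u ^ n) x := by
  refine sum_congr rfl fun n _ => ?_
  rw [show -u = (-1 : ℝ) • u by simp, smul_pow, LinearMap.smul_apply, smul_smul, expNegCoeff,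
    mul_comm]

theorem expPartial_neg_add_self_apply (u : Module.End ℝ E) (x : E) (N : ℕ) :
    expPartial (-u) (x + u x) N = ∑ n ∈ range N, expNegCoeff n • ((u ^ n) x + (u ^ (n + 1)) x) := by
  simp only [expPartial_neg, map_add, pow_succ, Module.End.mul_apply]

end ExpPartial

namespace BanachScale

variable {E : Type*} [AddCommGroup E] [Module ℝ E] {S : ℝ} (sc : BanachScale E S) (s : ℝ)

/-- The Banach space `E_s`, as a submodule of `E`. -/
def level : Submodule ℝ E where
  carrier := {x | sc.Mem s x}
  add_mem' := sc.mem_add s _ _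
  zero_mem' := sc.mem_zero s
  smul_mem' := sc.mem_smul s

def levelSeminorm : Seminorm ℝ (sc.level s) :=
  Seminorm.of (fun x => sc.norm s x) (fun x y => sc.norm_add s x y) fun c x => sc.norm_smul s c x

noncomputable instance : SeminormedAddCommGroup (sc.level s) :=
  (sc.levelSeminorm s).toAddGroupSeminorm.toSeminormedAddCommGroup

noncomputable instance : NormedSpace ℝ (sc.level s) where
  norm_smul_le c x := (map_smul_eq_mul (sc.levelSeminorm s) c x).le

variable {sc s}

theorem norm_sub_level (x y : sc.level s) : ‖x - y‖ = sc.norm s (x - y) := rfl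

theorem completeSpace_level (hs : 0 < s) (hsS : s ≤ S) : CompleteSpace (sc.level s) := by
  refine Metric.complete_of_cauchySeq_tendsto fun x hx => ?_
  obtain ⟨y, hy, hlim⟩ := sc.complete s hs hsS (fun n => x n) (fun n => (x n).2) fun ε hε => by
    obtain ⟨N, hN⟩ := Metric.cauchySeq_iff.1 hx ε hε
    exact ⟨N, fun m hm n hn => (dist_eq_norm (x m) (x n) ▸ hN m hm n hn).le⟩
  exact ⟨⟨y, hy⟩, tendsto_iff_norm_sub_tendsto_zero.2 hlim⟩

theorem convergesTo_of_hasSum {f : ℕ → sc.level s} {y : sc.level s} {P : ℕ → E}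
    (h : HasSum f y) (hP : ∀ N, P N = ∑ n ∈ range N, (f n : E)) : sc.ConvergesTo s P y := by
  obtain rfl : P = fun N => ((∑ n ∈ range N, f n : sc.level s) : E) :=
    funext fun N => by simp [hP]
  exact ⟨fun N => Subtype.prop _, y.2, tendsto_iff_norm_sub_tendsto_zero.1 h.tendsto_sum_nat⟩

variable {τ C : ℝ} {u : Module.End ℝ E}

theorem IsBounded.pow_apply_bound_step (hu : sc.IsBounded τ 1 C u) (hC : 0 ≤ C) {δ : ℝ} (hs : 0 < s)
    (hδ : 0 < δ) (n : ℕ) {z : E} (hτ : s + n * δ ≤ τ) (hz : sc.Mem (s + n * δ) z) :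
    sc.Mem s ((u ^ n) z) ∧ sc.norm s ((u ^ n) z) ≤ (C / δ) ^ n * sc.norm (s + n * δ) z := by
  induction n generalizing z with
  | zero => simpa using hz
  | succ n ih =>
    have hlev : s + n * δ + δ = s + (n + 1 : ℕ) * δ := by push_cast; ring
    obtain ⟨hmem, hnorm⟩ := hu (s + n * δ) δ (by positivity) hδ (hlev ▸ hτ) z (hlev ▸ hz)
    obtain ⟨hmem', hnorm'⟩ := ih (by nlinarith) hmem
    rw [pow_succ, Module.End.mul_apply]
    refine ⟨hmem', hnorm'.trans ?_⟩
    rw [pow_succ, mul_assoc, ← hlev, ← pow_one δ]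
    gcongr
    simpa using hnorm

theorem IsBounded.pow_apply_bound (hu : sc.IsBounded τ 1 C u) (hC : 0 ≤ C) (hτS : τ ≤ S)
    (hs : 0 < s) (hsτ : s < τ) (n : ℕ) {z : E} (hz : sc.Mem τ z) :
    sc.Mem s ((u ^ n) z) ∧ sc.norm s ((u ^ n) z) ≤ (C / (τ - s) * n) ^ n * sc.norm τ z := by
  rcases n.eq_zero_or_pos with rfl | hn
  · simpa using ⟨sc.mem_mono s τ z hs hsτ.le hz, sc.norm_mono s τ z hs hsτ.le hτS hz⟩
  have hn' : (0 : ℝ) < n := by exact_mod_cast hn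
  have hlev : s + n * ((τ - s) / n) = τ := by field_simp; ring
  have h := hu.pow_apply_bound_step hC hs (div_pos (sub_pos.2 hsτ) hn') n hlev.le (hlev ▸ hz)
  rwa [hlev, div_div_eq_mul_div, mul_div_right_comm] at h

theorem IsBounded.exists_level_powers (hu : sc.IsBounded τ 1 C u) (hC : 0 ≤ C) (hτS : τ ≤ S)
    (hs : 0 < s) (hsτ : s < τ) {z : E} (hz : sc.Mem τ z) :
    ∃ a : ℕ → sc.level s, (∀ n, (a n : E) = (u ^ n) z) ∧
      ∀ n, ‖a n‖ ≤ (C / (τ - s) * n) ^ n * sc.norm τ z :=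
  ⟨fun n => ⟨_, (hu.pow_apply_bound hC hτS hs hsτ n hz).1⟩, fun _ => rfl,
    fun n => (hu.pow_apply_bound hC hτS hs hsτ n hz).2⟩

end BanachScale

theorem exp_remainder_estimates_general {E : Type*} [AddCommGroup E] [Module ℝ E]
    {S : ℝ}
    (sc : BanachScale E S) (τ : ℝ) (hτS : τ ≤ S)
    (u : Module.End ℝ E) (C : ℝ) (hC : 0 ≤ C)
    (hu : sc.IsBounded τ 1 C u)
    (s : ℝ) (hs0 : 0 < s) (hsτ : s < τ)
    (hsmall : 3 * C / (τ - s) ≤ 1 / 2) :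
    ∀ x, sc.Mem τ x →
      ∃ yem yemu yep : E,
        sc.ConvergesTo s (expPartial (-u) x) yem ∧
        sc.ConvergesTo s (expPartial (-u) (x + u x)) yemu ∧
        sc.ConvergesTo s (expPartial u x) yep ∧
        sc.norm s (yemu - x) ≤ 36 * C ^ 2 / (τ - s) ^ 2 * sc.norm τ x ∧
        sc.norm s (yem - x) ≤ 6 * C / (τ - s) * sc.norm τ x ∧
        sc.norm s yep ≤ 2 * sc.norm τ x ∧
        (sc.Mem τ (u x) →
          sc.norm s (yemu - x) ≤ 2 * C / (τ - s) * sc.norm τ (u x) ∧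
          sc.norm s (yem - x) ≤ 2 * sc.norm τ (u x)) := by
  intro x hx
  have := completeSpace_level (sc := sc) hs0 (hsτ.le.trans hτS)
  set t := C / (τ - s) with ht_def
  have ht : 0 ≤ t := div_nonneg hC (sub_pos.2 hsτ).le
  have h3t : 3 * t ≤ 1 / 2 := by rwa [ht_def, ← mul_div_assoc]
  have hM := sc.norm_nonneg τ x
  obtain ⟨a, ha_coe, ha⟩ := hu.exists_level_powers hC hτS hs0 hsτ hx
  have hx0 : (a 0 : E) = x := by simp [ha_coe]
  have hc : ∀ n, |expNegCoeff n| ≤ (n ! : ℝ)⁻¹ := fun n => (abs_expNegCoeff n).le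
  obtain ⟨yem, hyem⟩ := summable_smul_of_abs_le ht (by linarith) hM hc ha
  obtain ⟨yep, hyep⟩ := summable_smul_of_abs_le (c := fun n => (n ! : ℝ)⁻¹) ht (by linarith) hM
    (fun n => by simp) ha
  obtain ⟨z, hz⟩ := summable_expNegCoeff_remainder ht (by linarith) hM ha
  refine ⟨yem, x + z, yep, convergesTo_of_hasSum hyem fun N => by simp [expPartial_neg, ha_coe],
    hx0 ▸ convergesTo_of_hasSum (hyem.smul_add_succ hz expNegCoeff_zero)
      fun N => by simp [expPartial_neg_add_self_apply, ha_coe],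
    convergesTo_of_hasSum hyep fun N => by simp [expPartial, ha_coe], ?_,
    by simpa only [norm_sub_level, hx0, mul_div_assoc] using
      hyem.norm_sub_le_of_abs_le expNegCoeff_zero ht h3t hM hc ha,
    hyep.norm_le_of_abs_le ht h3t hM (fun n => by simp) ha, fun hux => ?_⟩
  · rw [add_sub_cancel_left, mul_div_assoc, ← div_pow]
    exact hz.norm_le_of_expNegCoeff_remainder ht h3t hM ha
  obtain ⟨b, hb_coe, hb⟩ := hu.exists_level_powers hC hτS hs0 hsτ hux
  have hab : ∀ n, a (n + 1) = b n := fun n => Subtype.ext (by simp [ha_coe, hb_coe, pow_succ])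
  have hM' := sc.norm_nonneg τ (u x)
  refine ⟨?_, by simpa only [norm_sub_level, hx0] using hyem.norm_sub_le_of_shift hab ht h3t hM' hb⟩
  rw [add_sub_cancel_left, mul_div_assoc]
  exact hz.norm_le_of_expNegCoeff_remainder_of_shift hab ht h3t hM' hb

/-- Estimates for the exponential of a `1`-bounded `τ`-morphism `u` with constant `C`:
for `s < τ` with `3C/(τ−s) ≤ 1/2` and `x ∈ E_τ`, the series for `e^{-u}x`,
`e^{-u}(x + ux)` and `e^{u}x` converge in `E_s` and satisfy
(1) `‖e^{-u}(Id+u)x − x‖_s ≤ 36C²(τ−s)^{-2}‖x‖_τ`,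
(3) `‖e^{-u}x − x‖_s ≤ 6C(τ−s)^{-1}‖x‖_τ`,
(5) `‖e^{u}x‖_s ≤ 2‖x‖_τ`,
and, if moreover `u x ∈ E_τ`,
(2) `‖e^{-u}(Id+u)x − x‖_s ≤ 2C(τ−s)^{-1}‖u x‖_τ` and
(4) `‖e^{-u}x − x‖_s ≤ 2‖u x‖_τ`. -/
theorem exp_remainder_estimates {E : Type*} [AddCommGroup E] [Module ℝ E]
    {S : ℝ} (hS : 0 < S)
    (sc : BanachScale E S) (τ : ℝ) (hτ0 : 0 < τ) (hτS : τ ≤ S)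
    (u : Module.End ℝ E) (C : ℝ) (hC : 0 ≤ C)
    (hu : sc.IsBounded τ 1 C u)
    (s : ℝ) (hs0 : 0 < s) (hsτ : s < τ)
    (hsmall : 3 * C / (τ - s) ≤ 1 / 2) :
    ∀ x, sc.Mem τ x →
      ∃ yem yemu yep : E,
        sc.ConvergesTo s (expPartial (-u) x) yem ∧
        sc.ConvergesTo s (expPartial (-u) (x + u x)) yemu ∧
        sc.ConvergesTo s (expPartial u x) yep ∧
        sc.norm s (yemu - x) ≤ 36 * C ^ 2 / (τ - s) ^ 2 * sc.norm τ x ∧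
        sc.norm s (yem - x) ≤ 6 * C / (τ - s) * sc.norm τ x ∧
        sc.norm s yep ≤ 2 * sc.norm τ x ∧
        (sc.Mem τ (u x) →
          sc.norm s (yemu - x) ≤ 2 * C / (τ - s) * sc.norm τ (u x) ∧
          sc.norm s (yem - x) ≤ 2 * sc.norm τ (u x)) :=
  exp_remainder_estimates_general sc τ hτS u C hC hu s hs0 hsτ hsmall
end

section
/- Let n ≥ 1, s > 0, and let D_s := {z ∈ ℂ^n : max_j |z_j| ≤ s} be the closed polydisc of radius s. Let f be continuous on D_s and holomorphic on its interior, with Taylor expansion f(z) = Σ_{i ∈ ℕ^n} f_i z^i at the origin (z^i := z_1^{i_1} ⋯ z_n^{i_n}). Let S ⊆ ℕ^n \ {0} be a finite set, α ∈ ℝ^n and a > 0 such that |⟨α,i⟩| ≥ a for every i ∈ S (where i is viewed as a vector of ℝ^n). Then the polynomial g(z) := Σ_{i ∈ S} (f_i / ⟨α,i⟩) z^i satisfies ∫_{D_s} |g(z)|² dV(z) ≤ a^{-2} ∫_{D_s} |f(z)|² dV(z), where dV is the Lebesgue measure on ℂ^n ≅ ℝ^{2n}. -/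
/-!
The monomials `z^i` are orthogonal in `L²(D_r)`, with `∫_{D_r} |z^i|² = ∏ⱼ π r^(2iⱼ+2)/(iⱼ+1)`
(polar coordinates in each variable). For `r < s` the Taylor series of `f` converges normally
on `D_r`, so the coefficients of `f` against the monomials are the `c_i` and Bessel's inequality
gives `∑_{i ∈ S} |c_i|² ∫_{D_r} |z^i|² ≤ ∫_{D_r} |f|²`; letting `r → s` gives the same on `D_s`.
By orthogonality `∫_{D_s} |g|²` is the same sum with `|c_i|²` replaced by `|c_i|²/⟨α,i⟩²`,
and each of these weights is at most `a⁻²` times the old one.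
-/

open MeasureTheory ComplexConjugate Complex Real Set

section OrthogonalFamily

variable {α ι : Type*} [MeasurableSpace α] {μ : Measure α}

theorem MeasureTheory.MemLp.integrable_mul_conj {f g : α → ℂ} (hf : MemLp f 2 μ)
    (hg : MemLp g 2 μ) : Integrable (fun x => f x * conj (g x)) μ :=
  hf.integrable_mul hg.star

theorem integral_norm_sq_eq_re_integral_mul_conj (g : α → ℂ) :
    ∫ x, ‖g x‖ ^ 2 ∂μ = (∫ x, g x * conj (g x) ∂μ).re := by
  simp_rw [Complex.mul_conj']
  norm_cast

theorem integral_mul_conj_finset_sum_of_coeff {f : α → ℂ} {e : ι → α → ℂ} {c : ι → ℂ} {N : ι → ℝ}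
    (hf : MemLp f 2 μ) (he : ∀ i, MemLp (e i) 2 μ) (T : Finset ι)
    (hcoef : ∀ k ∈ T, ∫ x, f x * conj (e k x) ∂μ = c k * N k) :
    ∫ x, f x * conj (∑ i ∈ T, c i * e i x) ∂μ = ∑ i ∈ T, ‖c i‖ ^ 2 * N i := by
  simp_rw [map_sum, map_mul, Finset.mul_sum, mul_left_comm (f _)]
  rw [integral_finsetSum T fun i _ => (hf.integrable_mul_conj (he i)).const_mul _]
  simp_rw [integral_const_mul]
  push_cast
  refine Finset.sum_congr rfl fun i hi => ?_
  rw [hcoef i hi, ← mul_assoc, mul_comm (conj _), Complex.mul_conj']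

variable [DecidableEq ι] {e : ι → α → ℂ} {N : ι → ℝ}

theorem integral_norm_sq_finset_sum_of_orthogonal (he : ∀ i, MemLp (e i) 2 μ)
    (horth : ∀ i k, ∫ x, e i x * conj (e k x) ∂μ = if i = k then (N i : ℂ) else 0)
    (T : Finset ι) (b : ι → ℂ) :
    ∫ x, ‖∑ i ∈ T, b i * e i x‖ ^ 2 ∂μ = ∑ i ∈ T, ‖b i‖ ^ 2 * N i := by
  have hP : MemLp (fun x => ∑ i ∈ T, b i * e i x) 2 μ :=
    memLp_finsetSum T fun i _ => (he i).const_mul (b i)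
  have hcoef : ∀ k ∈ T, ∫ x, (∑ i ∈ T, b i * e i x) * conj (e k x) ∂μ = b k * N k := by
    intro k hk
    simp_rw [Finset.sum_mul, mul_assoc]
    rw [integral_finsetSum T fun i _ => ((he i).integrable_mul_conj (he k)).const_mul _]
    simp_rw [integral_const_mul, horth, mul_ite, mul_zero]
    rw [Finset.sum_ite_eq', if_pos hk]
  rw [integral_norm_sq_eq_re_integral_mul_conj, integral_mul_conj_finset_sum_of_coeff hP he T hcoef]
  norm_cast

theorem sum_norm_sq_mul_le_integral_norm_sq_of_orthogonal {f : α → ℂ} {c : ι → ℂ}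
    (hf : MemLp f 2 μ) (he : ∀ i, MemLp (e i) 2 μ)
    (horth : ∀ i k, ∫ x, e i x * conj (e k x) ∂μ = if i = k then (N i : ℂ) else 0)
    (hcoef : ∀ k, ∫ x, f x * conj (e k x) ∂μ = c k * N k) (T : Finset ι) :
    ∑ i ∈ T, ‖c i‖ ^ 2 * N i ≤ ∫ x, ‖f x‖ ^ 2 ∂μ := by
  set P : α → ℂ := fun x => ∑ i ∈ T, c i * e i x
  have hP : MemLp P 2 μ := memLp_finsetSum T fun i _ => (he i).const_mul (c i)
  have hfP : ∫ x, f x * conj (P x) ∂μ = ∑ i ∈ T, ‖c i‖ ^ 2 * N i :=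
    integral_mul_conj_finset_sum_of_coeff hf he T fun k _ => hcoef k
  have hfP_int := hf.integrable_mul_conj hP
  have hre : ∫ x, (f x * conj (P x)).re ∂μ = (∫ x, f x * conj (P x) ∂μ).re :=
    integral_re hfP_int
  have hexpand : ∫ x, ‖f x - P x‖ ^ 2 ∂μ =
      ∫ x, ‖f x‖ ^ 2 ∂μ + ∫ x, ‖P x‖ ^ 2 ∂μ - 2 * (∫ x, f x * conj (P x) ∂μ).re := by
    simp_rw [Complex.sq_norm, Complex.normSq_sub, ← Complex.sq_norm]
    have hf2 := (memLp_two_iff_integrable_sq_norm hf.1).1 hf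
    have hP2 := (memLp_two_iff_integrable_sq_norm hP.1).1 hP
    have hsum : Integrable (fun x => ‖f x‖ ^ 2 + ‖P x‖ ^ 2) μ := hf2.add hP2
    have hcross : Integrable (fun x => 2 * (f x * conj (P x)).re) μ := hfP_int.re.const_mul 2
    rw [integral_sub hsum hcross, integral_add hf2 hP2, integral_const_mul, hre]
  have hnonneg := integral_nonneg (μ := μ) (f := fun x => ‖f x - P x‖ ^ 2) fun x => sq_nonneg _
  rw [hexpand, integral_norm_sq_finset_sum_of_orthogonal he horth T c, hfP,
    Complex.ofReal_re] at hnonneg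
  linarith

theorem integral_mul_conj_eq_of_hasSum [IsFiniteMeasure μ] [Countable ι] {f : α → ℂ}
    {c : ι → ℂ} {B : ι → ℝ} (he : ∀ i, AEStronglyMeasurable (e i) μ)
    (horth : ∀ i k, ∫ x, e i x * conj (e k x) ∂μ = if i = k then (N i : ℂ) else 0)
    (hB : ∀ i, ∀ᵐ x ∂μ, ‖e i x‖ ≤ B i) (hcB : Summable fun i => ‖c i‖ * B i)
    (hf : ∀ᵐ x ∂μ, HasSum (fun i => c i * e i x) (f x)) (k : ι) :
    ∫ x, f x * conj (e k x) ∂μ = c k * N k := by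
  have hterms : HasSum (fun i => ∫ x, c i * e i x * conj (e k x) ∂μ)
      (∫ x, f x * conj (e k x) ∂μ) := by
    refine hasSum_integral_of_dominated_convergence (fun i _ => ‖c i‖ * B i * B k)
      (fun i => ((he i).const_mul (c i)).mul
        (Complex.continuous_conj.comp_aestronglyMeasurable (he k)))
      (fun i => ?_) (.of_forall fun _ => hcB.mul_right _) (integrable_const _)
      (hf.mono fun x hx => hx.mul_right _)
    filter_upwards [hB i, hB k] with x hi hk
    rw [norm_mul, norm_mul, Complex.norm_conj]
    have hci : ‖c i‖ * ‖e i x‖ ≤ ‖c i‖ * B i := mul_le_mul_of_nonneg_left hi (norm_nonneg _)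
    exact mul_le_mul hci hk (norm_nonneg _) ((by positivity : (0:ℝ) ≤ _).trans hci)
  have hcoef : ∀ i, ∫ x, c i * e i x * conj (e k x) ∂μ = if i = k then c k * N k else 0 := by
    intro i
    simp_rw [mul_assoc]
    rw [integral_const_mul, horth]
    split_ifs with h
    · rw [h]
    · rw [mul_zero]
  rw [funext hcoef] at hterms
  exact hterms.unique (hasSum_ite_eq k _)

end OrthogonalFamily

theorem integral_Ioo_exp_int_mul_I (m : ℤ) :
    ∫ θ in Ioo (-π) π, exp (m * θ * I) = if m = 0 then (2 * π : ℂ) else 0 := by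
  rw [← integral_Ioc_eq_integral_Ioo, ← intervalIntegral.integral_of_le (by linarith [pi_pos])]
  split_ifs with hm
  · simp [hm, two_mul]
  · have hmI : (m : ℂ) * I ≠ 0 := by simp [hm]
    simp_rw [mul_right_comm _ _ I]
    rw [integral_exp_mul_complex hmI, div_eq_zero_iff, sub_eq_zero, exp_eq_exp_iff_exists_int]
    exact .inl ⟨m, by push_cast; ring⟩

theorem setIntegral_closedBall_eq_polarCoord {E : Type*} [NormedAddCommGroup E]
    [NormedSpace ℝ E] (r : ℝ) (F : ℂ → E) :
    ∫ w in Metric.closedBall 0 r, F w =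
      ∫ p in Ioc 0 r ×ˢ Ioo (-π) π, p.1 • F (Complex.polarCoord.symm p) := by
  have hsub : Ioc 0 r ×ˢ Ioo (-π) π ⊆ polarCoord.target := by
    rw [polarCoord_target]
    exact prod_mono Ioc_subset_Ioi_self le_rfl
  rw [← integral_indicator measurableSet_closedBall, ← Complex.integral_comp_polarCoord_symm,
    ← inter_eq_self_of_subset_right hsub,
    ← setIntegral_indicator (measurableSet_Ioc.prod measurableSet_Ioo)]
  refine setIntegral_congr_fun polarCoord.open_target.measurableSet fun p hp => ?_
  rw [polarCoord_target] at hp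
  have hmem : Complex.polarCoord.symm p ∈ Metric.closedBall 0 r ↔ p ∈ Ioc 0 r ×ˢ Ioo (-π) π := by
    simp [abs_of_pos hp.1.out, hp.1.out, hp.2]
  by_cases h : p ∈ Ioc 0 r ×ˢ Ioo (-π) π
  · rw [indicator_of_mem (hmem.2 h), indicator_of_mem h]
  · rw [indicator_of_notMem (mt hmem.1 h), indicator_of_notMem h, smul_zero]

theorem integral_Ioc_ofReal_pow {r : ℝ} (hr : 0 ≤ r) (n : ℕ) :
    ∫ ρ in Ioc 0 r, (ρ : ℂ) ^ n = ((r ^ (n + 1) / (n + 1) : ℝ) : ℂ) := by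
  simp_rw [← ofReal_pow, integral_complex_ofReal, ← intervalIntegral.integral_of_le hr,
    integral_pow]
  simp

theorem integral_closedBall_pow_mul_conj_pow {r : ℝ} (hr : 0 ≤ r) (p q : ℕ) :
    ∫ w in Metric.closedBall (0 : ℂ) r, w ^ p * conj w ^ q =
      if p = q then ((π * r ^ (2 * p + 2) / (p + 1) : ℝ) : ℂ) else 0 := by
  have hpolar : ∀ x : ℝ × ℝ, x.1 • ((Complex.polarCoord.symm x) ^ p *
      conj (Complex.polarCoord.symm x) ^ q) =
        (x.1 : ℂ) ^ (p + q + 1) * exp (((p - q : ℤ) : ℂ) * x.2 * I) := by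
    rintro ⟨ρ, θ⟩
    have hexp : exp (θ * I) ^ p * exp (-(θ * I)) ^ q = exp (((p - q : ℤ) : ℂ) * θ * I) := by
      rw [← Complex.exp_nat_mul, ← Complex.exp_nat_mul, ← Complex.exp_add]
      push_cast
      ring_nf
    rw [Complex.polarCoord_symm_apply, ofReal_cos, ofReal_sin, ← exp_mul_I, map_mul, conj_ofReal,
      ← exp_conj, map_mul, conj_ofReal, conj_I, mul_neg, ← hexp, real_smul]
    ring
  rw [setIntegral_closedBall_eq_polarCoord, funext hpolar, Measure.volume_eq_prod,
    setIntegral_prod_mul (fun ρ : ℝ => (ρ : ℂ) ^ (p + q + 1))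
      (fun θ : ℝ => exp (((p - q : ℤ) : ℂ) * θ * I)),
    integral_Ioc_ofReal_pow hr, integral_Ioo_exp_int_mul_I]
  simp only [sub_eq_zero, Nat.cast_inj]
  split_ifs with h
  · subst h
    rw [← ofReal_ofNat, ← ofReal_mul, ← ofReal_mul, ofReal_inj]
    push_cast
    field_simp
    ring
  · rw [mul_zero]

section Polydisc

def closedPolydisc (ι : Type*) (r : ℝ) : Set (ι → ℂ) := {z | ∀ j, ‖z j‖ ≤ r}

noncomputable def polydiscMonomialNormSq (ι : Type*) [Fintype ι] (r : ℝ) (i : ι → ℕ) : ℝ :=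
  ∏ j, π * r ^ (2 * i j + 2) / (i j + 1)

variable {ι : Type*}

theorem closedPolydisc_eq_pi (r : ℝ) :
    closedPolydisc ι r = univ.pi fun _ => Metric.closedBall 0 r := by
  ext z
  simp [closedPolydisc]

theorem isCompact_closedPolydisc (r : ℝ) : IsCompact (closedPolydisc ι r) := by
  rw [closedPolydisc_eq_pi]
  exact isCompact_univ_pi fun _ => isCompact_closedBall _ _

variable [Fintype ι]

theorem ContinuousOn.memLp_two_closedPolydisc {r : ℝ} {g : (ι → ℂ) → ℂ}
    (hg : ContinuousOn g (closedPolydisc ι r)) :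
    MemLp g 2 (volume.restrict (closedPolydisc ι r)) :=
  (memLp_two_iff_integrable_sq_norm
    (hg.aestronglyMeasurable (isCompact_closedPolydisc r).measurableSet)).2
    ((hg.norm.pow 2).integrableOn_compact (isCompact_closedPolydisc r))

theorem memLp_two_closedPolydisc_monomial (r : ℝ) (i : ι → ℕ) :
    MemLp (fun z => ∏ j, z j ^ i j) 2 (volume.restrict (closedPolydisc ι r)) :=
  (by fun_prop : Continuous fun z : ι → ℂ => ∏ j, z j ^ i j).continuousOn.memLp_two_closedPolydisc

theorem polydiscMonomialNormSq_nonneg {r : ℝ} (hr : 0 ≤ r) (i : ι → ℕ) :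
    0 ≤ polydiscMonomialNormSq ι r i :=
  Finset.prod_nonneg fun _ _ => by positivity

theorem integral_closedPolydisc_monomial_mul_conj [DecidableEq ι] {r : ℝ} (hr : 0 ≤ r)
    (i k : ι → ℕ) :
    ∫ z in closedPolydisc ι r, (∏ j, z j ^ i j) * conj (∏ j, z j ^ k j) =
      if i = k then (polydiscMonomialNormSq ι r i : ℂ) else 0 := by
  simp_rw [map_prod, map_pow, ← Finset.prod_mul_distrib]
  rw [closedPolydisc_eq_pi, volume_pi, Measure.restrict_pi_pi,
    integral_fintype_prod_eq_prod (fun j w => w ^ i j * conj w ^ k j)]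
  simp_rw [integral_closedBall_pow_mul_conj_pow hr, Finset.prod_ite_zero, Finset.mem_univ,
    true_imp_iff, ← funext_iff, polydiscMonomialNormSq, ofReal_prod]

theorem sum_norm_sq_mul_le_integral_closedPolydisc_of_lt {r s : ℝ} (hr : 0 ≤ r) (hrs : r < s)
    {f : (ι → ℂ) → ℂ} {c : (ι → ℕ) → ℂ} (hcont : ContinuousOn f (closedPolydisc ι r))
    (hTaylor : ∀ z : ι → ℂ, (∀ j, ‖z j‖ < s) → HasSum (fun i => c i * ∏ j, z j ^ i j) (f z))
    (T : Finset (ι → ℕ)) :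
    ∑ i ∈ T, ‖c i‖ ^ 2 * polydiscMonomialNormSq ι r i ≤
      ∫ z in closedPolydisc ι r, ‖f z‖ ^ 2 := by
  classical
  have hD := isCompact_closedPolydisc (ι := ι) r
  have : IsFiniteMeasure (volume.restrict (closedPolydisc ι r)) :=
    isFiniteMeasure_restrict.2 hD.measure_ne_top
  have horth := integral_closedPolydisc_monomial_mul_conj (ι := ι) hr
  have hbound : ∀ i : ι → ℕ, ∀ᵐ z ∂volume.restrict (closedPolydisc ι r),
      ‖∏ j, z j ^ i j‖ ≤ ∏ j, r ^ i j := fun i =>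
    ae_restrict_of_forall_mem hD.measurableSet fun z hz =>
      (norm_prod _ _).trans_le <| Finset.prod_le_prod (fun _ _ => norm_nonneg _) fun j _ =>
        (norm_pow _ _).trans_le (pow_le_pow_left₀ (norm_nonneg _) (hz j) _)
  -- the Taylor series converges at `(r, …, r)`, hence absolutely since `ℂ` is finite-dimensional
  have hsummable : Summable fun i : ι → ℕ => ‖c i‖ * ∏ j, r ^ i j := by
    have := (hTaylor (fun _ => (r : ℂ)) fun _ => by
      rwa [norm_real, Real.norm_of_nonneg hr]).summable
    refine (summable_norm_iff.2 this).congr fun i => ?_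
    simp [norm_prod, Real.norm_of_nonneg hr]
  have hexp : ∀ᵐ z ∂volume.restrict (closedPolydisc ι r),
      HasSum (fun i => c i * ∏ j, z j ^ i j) (f z) :=
    ae_restrict_of_forall_mem hD.measurableSet fun z hz =>
      hTaylor z fun j => (hz j).trans_lt hrs
  exact sum_norm_sq_mul_le_integral_norm_sq_of_orthogonal hcont.memLp_two_closedPolydisc
    (memLp_two_closedPolydisc_monomial r) horth
    (integral_mul_conj_eq_of_hasSum (fun i => (memLp_two_closedPolydisc_monomial r i).1) horth
      hbound hsummable hexp) T

theorem sum_norm_sq_mul_le_integral_closedPolydisc {s : ℝ} (hs : 0 < s)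
    {f : (ι → ℂ) → ℂ} {c : (ι → ℕ) → ℂ} (hcont : ContinuousOn f (closedPolydisc ι s))
    (hTaylor : ∀ z : ι → ℂ, (∀ j, ‖z j‖ < s) → HasSum (fun i => c i * ∏ j, z j ^ i j) (f z))
    (T : Finset (ι → ℕ)) :
    ∑ i ∈ T, ‖c i‖ ^ 2 * polydiscMonomialNormSq ι s i ≤
      ∫ z in closedPolydisc ι s, ‖f z‖ ^ 2 := by
  have hcontinuous : Continuous fun r => ∑ i ∈ T, ‖c i‖ ^ 2 * polydiscMonomialNormSq ι r i := by
    unfold polydiscMonomialNormSq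
    fun_prop
  have hsub : ∀ r ≤ s, closedPolydisc ι r ⊆ closedPolydisc ι s := fun r hrs z hz j =>
    (hz j).trans hrs
  refine le_of_tendsto (hcontinuous.tendsto s |>.mono_left nhdsWithin_le_nhds)
    (Filter.eventually_of_mem (Ioo_mem_nhdsLT hs) fun r hr => ?_)
  refine (sum_norm_sq_mul_le_integral_closedPolydisc_of_lt hr.1.le hr.2
    (hcont.mono (hsub r hr.2.le)) hTaylor T).trans
    (setIntegral_mono_set ?_ (.of_forall fun z => sq_nonneg _) (hsub r hr.2.le).eventuallyLE)
  exact (hcont.norm.pow 2).integrableOn_compact (isCompact_closedPolydisc s)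

end Polydisc

theorem norm_div_ofReal_sq_mul_le {x : ℂ} {d a N : ℝ} (ha : 0 < a) (had : a ≤ |d|)
    (hN : 0 ≤ N) : ‖x / d‖ ^ 2 * N ≤ (a ^ 2)⁻¹ * (‖x‖ ^ 2 * N) :=
  calc ‖x / d‖ ^ 2 * N = (|d| ^ 2)⁻¹ * (‖x‖ ^ 2 * N) := by
        rw [norm_div, norm_real, Real.norm_eq_abs]
        ring
    _ ≤ (a ^ 2)⁻¹ * (‖x‖ ^ 2 * N) := by gcongr

theorem hadamard_quotient_L2_estimate_general {n : ℕ} (s : ℝ) (hs : 0 < s)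
    (f : (Fin n → ℂ) → ℂ) (c : (Fin n → ℕ) → ℂ)
    (hcont : ContinuousOn f {z : Fin n → ℂ | ∀ j, ‖z j‖ ≤ s})
    (hTaylor : ∀ z : Fin n → ℂ, (∀ j, ‖z j‖ < s) →
      HasSum (fun i : Fin n → ℕ => c i * ∏ j, z j ^ i j) (f z))
    (T : Finset (Fin n → ℕ))
    (α : Fin n → ℝ) (a : ℝ) (ha : 0 < a)
    (hα : ∀ i ∈ T, a ≤ |∑ j, α j * (i j : ℝ)|) :
    ∫ z in {z : Fin n → ℂ | ∀ j, ‖z j‖ ≤ s},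
        ‖∑ i ∈ T, c i / ((∑ j, α j * (i j : ℝ) : ℝ) : ℂ) * ∏ j, z j ^ i j‖ ^ 2
      ≤ (a ^ 2)⁻¹ *
        ∫ z in {z : Fin n → ℂ | ∀ j, ‖z j‖ ≤ s}, ‖f z‖ ^ 2 := by
  calc _ = ∑ i ∈ T, ‖c i / ((∑ j, α j * (i j : ℝ) : ℝ) : ℂ)‖ ^ 2 *
        polydiscMonomialNormSq (Fin n) s i :=
        integral_norm_sq_finset_sum_of_orthogonal (memLp_two_closedPolydisc_monomial s)
          (integral_closedPolydisc_monomial_mul_conj hs.le) T _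
    _ ≤ ∑ i ∈ T, (a ^ 2)⁻¹ * (‖c i‖ ^ 2 * polydiscMonomialNormSq (Fin n) s i) :=
        Finset.sum_le_sum fun i hi =>
          norm_div_ofReal_sq_mul_le ha (hα i hi) (polydiscMonomialNormSq_nonneg hs.le i)
    _ = (a ^ 2)⁻¹ * ∑ i ∈ T, ‖c i‖ ^ 2 * polydiscMonomialNormSq (Fin n) s i :=
        (Finset.mul_sum ..).symm
    _ ≤ _ := by
        gcongr
        exact sum_norm_sq_mul_le_integral_closedPolydisc hs hcont hTaylor T

/-- `L²` estimate for the truncated Hadamard quotient on the polydisc: if `f` is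
continuous on the closed polydisc `D_s ⊂ ℂⁿ`, holomorphic on its interior, with Taylor
expansion `f(z) = Σ_i c_i z^i`, and if `S` is a finite set of nonzero multi-indices with
`|⟨α,i⟩| ≥ a` for all `i ∈ S`, then the polynomial `g(z) = Σ_{i∈S} (c_i/⟨α,i⟩) z^i`
satisfies `∫_{D_s} |g|² dV ≤ a⁻² ∫_{D_s} |f|² dV`. -/
theorem hadamard_quotient_L2_estimate {n : ℕ} (hn : 1 ≤ n) (s : ℝ) (hs : 0 < s)
    (f : (Fin n → ℂ) → ℂ) (c : (Fin n → ℕ) → ℂ)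
    (hcont : ContinuousOn f {z : Fin n → ℂ | ∀ j, ‖z j‖ ≤ s})
    (hdiff : DifferentiableOn ℂ f {z : Fin n → ℂ | ∀ j, ‖z j‖ < s})
    (hTaylor : ∀ z : Fin n → ℂ, (∀ j, ‖z j‖ < s) →
      HasSum (fun i : Fin n → ℕ => c i * ∏ j, z j ^ i j) (f z))
    (T : Finset (Fin n → ℕ)) (hT0 : ∀ i ∈ T, i ≠ 0)
    (α : Fin n → ℝ) (a : ℝ) (ha : 0 < a)
    (hα : ∀ i ∈ T, a ≤ |∑ j, α j * (i j : ℝ)|) :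
    ∫ z in {z : Fin n → ℂ | ∀ j, ‖z j‖ ≤ s},
        ‖∑ i ∈ T, c i / ((∑ j, α j * (i j : ℝ) : ℝ) : ℂ) * ∏ j, z j ^ i j‖ ^ 2
      ≤ (a ^ 2)⁻¹ *
        ∫ z in {z : Fin n → ℂ | ∀ j, ‖z j‖ ≤ s}, ‖f z‖ ^ 2 :=
  hadamard_quotient_L2_estimate_general s hs f c hcont hTaylor T α a ha hα
end
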